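/- arXiv:1606.02220 — 6 statements merged into one kernel-verified Lean document; each statement's English description precedes it below -/
import Mathlib

section
/- Let G be a simple graph with vertex set V, let P = (p₀,p₁,p₂) be a weak barycentric representation of G, and let N be a positive integer with p_i(v) < N for every vertex v and every i ∈ {0,1,2}. Define p'_i(v) := N·p_i(v) + p_{i+1}(v) for i = 0,1,2 (indices taken modulo 3). Then P' = (p'₀,p'₁,p'₂) is also a weak barycentric representation of G. -/
/-- Lexicographic comparison of pairs of naturals: (a,b) <_lex (c,d). -/
def LexLt (a b c d : ℕ) : Prop := a < c ∨ (a = c ∧ b < d)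

/-- A weak barycentric representation of a simple graph `G`:
an injective assignment of triples of naturals with constant coordinate-sum,
such that every edge is lexicographically "dominated" by every other vertex
in some coordinate pair (indices mod 3). -/
def IsWeakBarycentric {V : Type*} (G : SimpleGraph V) (p : Fin 3 → V → ℕ) : Prop :=
  Function.Injective (fun v => (p 0 v, p 1 v, p 2 v)) ∧
  (∃ c : ℕ, ∀ v, p 0 v + p 1 v + p 2 v = c) ∧
  (∀ u v, G.Adj u v → ∀ z, z ≠ u → z ≠ v →
    ∃ k : Fin 3,
      LexLt (p k u) (p (k + 1) u) (p k z) (p (k + 1) z) ∧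
      LexLt (p k v) (p (k + 1) v) (p k z) (p (k + 1) z))

lemma unq (N a b c d : ℕ) (hN : 0 < N) (hb : b < N) (hd : d < N)
    (h : N * a + b = N * c + d) : a = c ∧ b = d := by
  have h1 : (N * a + b) / N = a + b / N := Nat.mul_add_div hN a b
  have h2 : (N * c + d) / N = c + d / N := Nat.mul_add_div hN c d
  rw [Nat.div_eq_of_lt hb] at h1
  rw [Nat.div_eq_of_lt hd] at h2
  have hac : a = c := by rw [h] at h1; omega
  subst hac
  omega

lemma lex_step (N a b c d e f : ℕ) (hb : b < N) (h : LexLt a b c d) :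
    LexLt (N * a + b) e (N * c + d) f := by
  left
  rcases h with h | ⟨h1, h2⟩
  · calc N * a + b < N * a + N := by omega
      _ = N * (a + 1) := by ring
      _ ≤ N * c := Nat.mul_le_mul_left N h
      _ ≤ N * c + d := Nat.le_add_right _ _
  · subst h1; omega

/-- If `P = (p₀,p₁,p₂)` is a weak barycentric representation of `G` and `N` is a
positive integer with `pᵢ(v) < N` for all `v` and `i`, then
`p'ᵢ(v) = N·pᵢ(v) + p_{i+1}(v)` (indices mod 3) is also a weak barycentric
representation of `G`. -/
theorem transformed_weak_barycentric {V : Type*} (G : SimpleGraph V)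
    (p : Fin 3 → V → ℕ) (hP : IsWeakBarycentric G p)
    (N : ℕ) (hN : 0 < N) (hb : ∀ (v : V) (i : Fin 3), p i v < N) :
    IsWeakBarycentric G (fun i v => N * p i v + p (i + 1) v) := by
  obtain ⟨hinj, ⟨c, hc⟩, hedge⟩ := hP
  refine ⟨?_, ⟨N * c + c, ?_⟩, ?_⟩
  · intro u v h
    simp only [Prod.mk.injEq] at h
    obtain ⟨h0, h1, _⟩ := h
    have e01 : (0 : Fin 3) + 1 = 1 := by decide
    have e12 : (1 : Fin 3) + 1 = 2 := by decide
    rw [e01] at h0; rw [e12] at h1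
    obtain ⟨a0, a1⟩ := unq N _ _ _ _ hN (hb u 1) (hb v 1) h0
    obtain ⟨_, a2⟩ := unq N _ _ _ _ hN (hb u 2) (hb v 2) h1
    apply hinj
    simp [a0, a1, a2]
  · intro v
    have e01 : (0 : Fin 3) + 1 = 1 := by decide
    have e12 : (1 : Fin 3) + 1 = 2 := by decide
    have e20 : (2 : Fin 3) + 1 = 0 := by decide
    simp only [e01, e12, e20]
    have := hc v
    ring_nf
    nlinarith [hc v]
  · intro u v huv z hzu hzv
    obtain ⟨k, hk1, hk2⟩ := hedge u v huv z hzu hzv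
    exact ⟨k, lex_step N _ _ _ _ _ _ (hb u (k+1)) hk1,
      lex_step N _ _ _ _ _ _ (hb v (k+1)) hk2⟩
end

section
/- Let u, v, w, z be points in ℝ² satisfying x(w) ≤ x(u) ≤ x(v) ≤ x(z) and y(u) ≤ y(w) ≤ y(z) ≤ y(v), where x(·) and y(·) denote the first and second coordinates. Then the closed straight-line segment from u to v and the closed straight-line segment from w to z have a common point. -/
/-- Helper: a convex combination hitting zero between a nonpositive and a
nonnegative number. -/
lemma exists_convex_zero (A B : ℝ) (hA : A ≤ 0) (hB : 0 ≤ B) :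
    ∃ t : ℝ, 0 ≤ t ∧ t ≤ 1 ∧ (1 - t) * A + t * B = 0 := by
  rcases eq_or_lt_of_le (hA.trans hB) with h | h
  · exact ⟨0, le_refl 0, zero_le_one, by nlinarith⟩
  · have hAB : A - B < 0 := by linarith
    refine ⟨A / (A - B), div_nonneg_of_nonpos hA hAB.le, ?_, ?_⟩
    · rw [div_le_one_of_neg hAB]; linarith
    · have : A - B ≠ 0 := hAB.ne
      field_simp
      ring

/-- If `x(w) ≤ x(u) ≤ x(v) ≤ x(z)` and `y(u) ≤ y(w) ≤ y(z) ≤ y(v)`, then the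
closed segments `[u,v]` and `[w,z]` have a common point. -/
theorem interleaved_segments_cross (u v w z : ℝ × ℝ)
    (h1 : w.1 ≤ u.1) (h2 : u.1 ≤ v.1) (h3 : v.1 ≤ z.1)
    (h4 : u.2 ≤ w.2) (h5 : w.2 ≤ z.2) (h6 : z.2 ≤ v.2) :
    (segment ℝ u v ∩ segment ℝ w z).Nonempty := by
  rcases eq_or_lt_of_le (h1.trans (h2.trans h3)) with hd | hd
  · -- vertical case: all x-coordinates equal
    have hu1 : u.1 = w.1 := le_antisymm (by linarith) h1
    have hv1 : v.1 = w.1 := by linarith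
    obtain ⟨t, ht0, ht1, ht⟩ := exists_convex_zero (u.2 - w.2) (v.2 - w.2)
      (by linarith) (by linarith)
    refine ⟨w, ⟨1 - t, t, by linarith, ht0, by ring, ?_⟩, left_mem_segment ℝ w z⟩
    have : ((1 - t) • u + t • v).1 = (1 - t) * u.1 + t * v.1 := rfl
    apply Prod.ext
    · show (1 - t) * u.1 + t * v.1 = w.1
      rw [hu1, hv1]; ring
    · show (1 - t) * u.2 + t * v.2 = w.2
      nlinarith [ht]
  · -- generic case: w.1 < z.1
    set d1 := z.1 - w.1 with hd1
    set d2 := z.2 - w.2 with hd2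
    have hd1pos : 0 < d1 := by simp [hd1]; linarith
    have hd2nn : 0 ≤ d2 := by simp [hd2]; linarith
    have hφu : d1 * (u.2 - w.2) - d2 * (u.1 - w.1) ≤ 0 := by nlinarith
    have hφv : 0 ≤ d1 * (v.2 - w.2) - d2 * (v.1 - w.1) := by nlinarith
    obtain ⟨t, ht0, ht1, ht⟩ := exists_convex_zero _ _ hφu hφv
    set px := (1 - t) * u.1 + t * v.1 with hpx
    set py := (1 - t) * u.2 + t * v.2 with hpy
    have hmem1 : (px, py) ∈ segment ℝ u v :=
      ⟨1 - t, t, by linarith, ht0, by ring, rfl⟩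
    have hxl : w.1 ≤ px := by nlinarith
    have hxr : px ≤ z.1 := by nlinarith
    have hφp : d1 * (py - w.2) = d2 * (px - w.1) := by
      rw [hpx, hpy]; nlinarith [ht]
    set s := (px - w.1) / d1 with hs
    have hs0 : 0 ≤ s := div_nonneg (by linarith) hd1pos.le
    have hs1 : s ≤ 1 := by
      rw [hs, div_le_one hd1pos]; linarith
    refine ⟨(px, py), hmem1, 1 - s, s, by linarith, hs0, by ring, ?_⟩
    apply Prod.ext
    · show (1 - s) * w.1 + s * z.1 = px
      rw [hs]; field_simp; ring
    · show (1 - s) * w.2 + s * z.2 = py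
      have : py - w.2 = s * d2 := by
        rw [hs, div_mul_eq_mul_div, eq_div_iff hd1pos.ne']
        linear_combination hφp
      rw [hd2] at this; linarith
end

section
/- Let G be a simple graph and let c : V(G) → Fin 4 be a proper coloring of G (adjacent vertices receive distinct colors). Let u, v, w be three pairwise adjacent vertices of G. Then exactly one of the three edges {u,v}, {v,w}, {w,u} has its set of endpoint colors equal to {0,1} or to {2,3}. -/
/-- The pair of colors `{a,b}` is one of the two matched pairs `{0,1}` or `{2,3}`. -/
def MatchedPair (a b : Fin 4) : Prop :=
  ({a, b} : Finset (Fin 4)) = {0, 1} ∨ ({a, b} : Finset (Fin 4)) = {2, 3}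

instance (a b : Fin 4) : Decidable (MatchedPair a b) := instDecidableOr

lemma matched_aux : ∀ a b d : Fin 4, a ≠ b → b ≠ d → d ≠ a →
    (MatchedPair a b ∧ ¬MatchedPair b d ∧ ¬MatchedPair d a) ∨
    (¬MatchedPair a b ∧ MatchedPair b d ∧ ¬MatchedPair d a) ∨
    (¬MatchedPair a b ∧ ¬MatchedPair b d ∧ MatchedPair d a) := by unfold MatchedPair; decide

/-- Given a proper 4-coloring `c` of `G` and three pairwise adjacent vertices
`u, v, w`, exactly one of the edges `{u,v}`, `{v,w}`, `{w,u}` has its endpoint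
colors equal to `{0,1}` or `{2,3}`. -/
theorem triangle_exactly_one_matched_edge {V : Type*} (G : SimpleGraph V)
    (c : V → Fin 4) (hc : ∀ u v : V, G.Adj u v → c u ≠ c v)
    (u v w : V) (huv : G.Adj u v) (hvw : G.Adj v w) (hwu : G.Adj w u) :
    (MatchedPair (c u) (c v) ∧ ¬MatchedPair (c v) (c w) ∧ ¬MatchedPair (c w) (c u)) ∨
    (¬MatchedPair (c u) (c v) ∧ MatchedPair (c v) (c w) ∧ ¬MatchedPair (c w) (c u)) ∨
    (¬MatchedPair (c u) (c v) ∧ ¬MatchedPair (c v) (c w) ∧ MatchedPair (c w) (c u)) :=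
  matched_aux _ _ _ (hc u v huv) (hc v w hvw) (hc w u hwu)
end

section
/- Let k ≥ 2 be an integer and consider the nested-triangle drawing with points u_i, v_i, w_i for i = 1,…,k. Then: (1) for every 1 ≤ i ≤ k−1, the quadrilateral with vertices u_i, u_{i+1}, v_{i+1}, v_i (in this cyclic order) is strictly convex; (2) for every 1 ≤ i ≤ k−1, the quadrilateral with vertices w_i, w_{i+1}, u_{i+1}, u_i is strictly convex; (3) for every 1 ≤ i ≤ k−2, the quadrilateral with vertices v_i, v_{i+1}, w_{i+1}, w_i is strictly convex; and (4) the three points w_k, v_k, v_{k−1} are collinear, with v_k lying strictly between w_k and v_{k−1} (a straight angle of the quadrilateral v_{k−1}, v_k, w_k, w_{k−1} at v_k). -/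
/-- The points of the nested-triangle drawing, with real coordinates. -/
def ntU (k i : ℕ) : ℝ × ℝ := ((i : ℝ), (i : ℝ))

def ntV (k i : ℕ) : ℝ × ℝ := ((3 * k + 1 - i : ℝ), (k + i : ℝ))

def ntW (k i : ℕ) : ℝ × ℝ := ((k + i : ℝ), (4 * k + 1 - 2 * i : ℝ))

/-- Cross product of two planar vectors. -/
def cross2 (p q : ℝ × ℝ) : ℝ := p.1 * q.2 - p.2 * q.1

/-- `(A,B,C,D)` forms a strictly convex quadrilateral: the cross products of
consecutive edge vectors are all nonzero and of the same sign. -/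
def StrictConvexQuad (A B C D : ℝ × ℝ) : Prop :=
  (0 < cross2 (B - A) (C - B) ∧ 0 < cross2 (C - B) (D - C) ∧
   0 < cross2 (D - C) (A - D) ∧ 0 < cross2 (A - D) (B - A)) ∨
  (cross2 (B - A) (C - B) < 0 ∧ cross2 (C - B) (D - C) < 0 ∧
   cross2 (D - C) (A - D) < 0 ∧ cross2 (A - D) (B - A) < 0)

/-- In the nested-triangle drawing with `k ≥ 2`, the quadrilaterals
`uᵢ uᵢ₊₁ vᵢ₊₁ vᵢ` (1 ≤ i ≤ k−1), `wᵢ wᵢ₊₁ uᵢ₊₁ uᵢ` (1 ≤ i ≤ k−1) and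
`vᵢ vᵢ₊₁ wᵢ₊₁ wᵢ` (1 ≤ i ≤ k−2) are strictly convex, while `w_k, v_k, v_{k−1}`
are collinear with `v_k` strictly between `w_k` and `v_{k−1}`. -/
theorem nested_triangle_faces_convex (k : ℕ) (hk : 2 ≤ k) :
    (∀ i : ℕ, 1 ≤ i → i ≤ k - 1 →
        StrictConvexQuad (ntU k i) (ntU k (i + 1)) (ntV k (i + 1)) (ntV k i)) ∧
    (∀ i : ℕ, 1 ≤ i → i ≤ k - 1 →
        StrictConvexQuad (ntW k i) (ntW k (i + 1)) (ntU k (i + 1)) (ntU k i)) ∧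
    (∀ i : ℕ, 1 ≤ i → i ≤ k - 2 →
        StrictConvexQuad (ntV k i) (ntV k (i + 1)) (ntW k (i + 1)) (ntW k i)) ∧
    Sbtw ℝ (ntW k k) (ntV k k) (ntV k (k - 1)) := by
  have hkR : (2 : ℝ) ≤ (k : ℝ) := by exact_mod_cast hk
  refine ⟨?_, ?_, ?_, ?_⟩
  · intro i hi1 hi2
    have h : (i : ℝ) + 1 ≤ (k : ℝ) := by
      have : i + 1 ≤ k := by omega
      exact_mod_cast this
    right
    simp only [ntU, ntV, cross2, Prod.fst_sub, Prod.snd_sub, Prod.fst, Prod.snd]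
    push_cast
    refine ⟨by nlinarith, by nlinarith, by nlinarith, by nlinarith⟩
  · intro i hi1 hi2
    have h : (i : ℝ) + 1 ≤ (k : ℝ) := by
      have : i + 1 ≤ k := by omega
      exact_mod_cast this
    right
    simp only [ntU, ntW, cross2, Prod.fst_sub, Prod.snd_sub, Prod.fst, Prod.snd]
    push_cast
    refine ⟨by nlinarith, by nlinarith, by nlinarith, by nlinarith⟩
  · intro i hi1 hi2
    have h : (i : ℝ) + 2 ≤ (k : ℝ) := by
      have : i + 2 ≤ k := by omega
      exact_mod_cast this
    right
    simp only [ntV, ntW, cross2, Prod.fst_sub, Prod.snd_sub, Prod.fst, Prod.snd]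
    push_cast
    refine ⟨by nlinarith, by nlinarith, by nlinarith, by nlinarith⟩
  · have hcast : ((k - 1 : ℕ) : ℝ) = (k : ℝ) - 1 := by
      have : 1 ≤ k := by omega
      push_cast [Nat.cast_sub this]
      ring
    have hmid : ntV k k = midpoint ℝ (ntW k k) (ntV k (k - 1)) := by
      simp only [ntV, ntW, midpoint, hcast, Prod.ext_iff]
      constructor <;> · simp [AffineMap.lineMap_apply] ; ring
    have hne : ntW k k ≠ ntV k (k - 1) := by
      simp only [ntV, ntW, hcast, Prod.ext_iff, ne_eq, not_and]
      intro h
      nlinarith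
    rw [hmid]
    exact sbtw_midpoint_of_ne ℝ hne
end

section
/- Let S be a finite set of points in ℝ² such that no two distinct points of S share an x-coordinate or a y-coordinate. Let x, u₁, u₂, u₃, u₄ ∈ S be five distinct points such that u₁ lies in the open upper-right quadrant of x (both coordinates strictly larger than those of x), u₂ in the open upper-left quadrant, u₃ in the open lower-left quadrant, and u₄ in the open lower-right quadrant. Assume that for each of the eight pairs (x,u₁), (x,u₂), (x,u₃), (x,u₄), (u₁,u₂), (u₂,u₃), (u₃,u₄), (u₄,u₁), the set R(a,b) contains no point of S other than possibly a and b. Let x' := (max(x(u₂), x(u₃)), max(y(u₃), y(u₄))), and assume x' ∉ S. Then for each i ∈ {1,2,3,4}, the set R(x', u_i) contains no point of S ∖ {x}. (Hence relocating x to x' — a point lying on a grid-line of u₂ or u₃ and on a grid-line of u₃ or u₄ — preserves the rectangle-of-influence property of the four edges incident to x.) -/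
/-- `RI a b` is the relative interior of the smallest axis-parallel closed
rectangle containing `a` and `b`: the open rectangle if `a` and `b` differ in
both coordinates, the open segment if they share exactly one coordinate, and
empty if `a = b`. -/
def RI (a b : ℝ × ℝ) : Set (ℝ × ℝ) :=
  if a = b then ∅
  else
    {q | ((a.1 = b.1 ∧ q.1 = a.1) ∨ (min a.1 b.1 < q.1 ∧ q.1 < max a.1 b.1)) ∧
         ((a.2 = b.2 ∧ q.2 = a.2) ∨ (min a.2 b.2 < q.2 ∧ q.2 < max a.2 b.2))}

lemma mem_RI_iff {a b q : ℝ × ℝ} (h1 : a.1 ≠ b.1) (h2 : a.2 ≠ b.2) :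
    q ∈ RI a b ↔ (min a.1 b.1 < q.1 ∧ q.1 < max a.1 b.1) ∧
      (min a.2 b.2 < q.2 ∧ q.2 < max a.2 b.2) := by
  have hab : a ≠ b := fun h => h1 (by rw [h])
  rw [RI, if_neg hab]
  simp only [Set.mem_setOf_eq, h1, h2, false_and, false_or]

lemma mem_RI_vert {a b q : ℝ × ℝ} (h1 : a.1 = b.1) (h2 : a.2 ≠ b.2) :
    q ∈ RI a b ↔ q.1 = a.1 ∧ (min a.2 b.2 < q.2 ∧ q.2 < max a.2 b.2) := by
  have hab : a ≠ b := fun h => h2 (by rw [h])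
  rw [RI, if_neg hab]
  simp only [Set.mem_setOf_eq]
  constructor
  · rintro ⟨hxc, hyc⟩
    refine ⟨?_, ?_⟩
    · rcases hxc with ⟨_, h⟩ | ⟨hp, hq⟩
      · exact h
      · exfalso; rw [h1] at hp hq; rw [min_self] at hp; rw [max_self] at hq; linarith
    · rcases hyc with ⟨he, _⟩ | h
      · exact absurd he h2
      · exact h
  · rintro ⟨hxc, hyc⟩
    exact ⟨Or.inl ⟨h1, hxc⟩, Or.inr hyc⟩

lemma mem_RI_horiz {a b q : ℝ × ℝ} (h1 : a.1 ≠ b.1) (h2 : a.2 = b.2) :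
    q ∈ RI a b ↔ q.2 = a.2 ∧ (min a.1 b.1 < q.1 ∧ q.1 < max a.1 b.1) := by
  have hab : a ≠ b := fun h => h1 (by rw [h])
  rw [RI, if_neg hab]
  simp only [Set.mem_setOf_eq]
  constructor
  · rintro ⟨hxc, hyc⟩
    refine ⟨?_, ?_⟩
    · rcases hyc with ⟨_, h⟩ | ⟨hp, hq⟩
      · exact h
      · exfalso; rw [h2] at hp hq; rw [min_self] at hp; rw [max_self] at hq; linarith
    · rcases hxc with ⟨he, _⟩ | h
      · exact absurd he h1
      · exact h
  · rintro ⟨hxc, hyc⟩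
    exact ⟨Or.inr hyc, Or.inl ⟨h2, hxc⟩⟩

/-- Moving a degree-4 vertex `x` of an RI-drawing to the corner point
`x' = (max(x(u₂),x(u₃)), max(y(u₃),y(u₄)))` keeps the rectangles of influence
of the four incident edges empty of other points of `S`. -/
theorem move_vertex_keeps_RI (S : Set (ℝ × ℝ)) (hfin : S.Finite)
    (hgen : ∀ p ∈ S, ∀ q ∈ S, p ≠ q → p.1 ≠ q.1 ∧ p.2 ≠ q.2)
    (x u1 u2 u3 u4 : ℝ × ℝ)
    (hx : x ∈ S) (h1 : u1 ∈ S) (h2 : u2 ∈ S) (h3 : u3 ∈ S) (h4 : u4 ∈ S)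
    (hdist : [x, u1, u2, u3, u4].Pairwise (· ≠ ·))
    (hq1 : x.1 < u1.1 ∧ x.2 < u1.2)
    (hq2 : u2.1 < x.1 ∧ x.2 < u2.2)
    (hq3 : u3.1 < x.1 ∧ u3.2 < x.2)
    (hq4 : x.1 < u4.1 ∧ u4.2 < x.2)
    (hemp : ∀ a b : ℝ × ℝ,
      ((a, b) = (x, u1) ∨ (a, b) = (x, u2) ∨ (a, b) = (x, u3) ∨ (a, b) = (x, u4) ∨
       (a, b) = (u1, u2) ∨ (a, b) = (u2, u3) ∨ (a, b) = (u3, u4) ∨ (a, b) = (u4, u1)) →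
      ∀ q ∈ S, q ≠ a → q ≠ b → q ∉ RI a b)
    (x' : ℝ × ℝ) (hx' : x' = (max u2.1 u3.1, max u3.2 u4.2)) (hx'S : x' ∉ S) :
    ∀ q ∈ S, q ≠ x →
      q ∉ RI x' u1 ∧ q ∉ RI x' u2 ∧ q ∉ RI x' u3 ∧ q ∉ RI x' u4 := by
  intro q hq hqx
  -- pairwise distinctness
  simp only [List.pairwise_cons, List.mem_cons, List.mem_singleton, List.not_mem_nil,
    List.Pairwise.nil, forall_eq_or_imp, forall_eq, List.not_mem_nil, and_true] at hdist
  have d12 : u1 ≠ u2 := by tauto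
  have d14 : u1 ≠ u4 := by tauto
  have d23 : u2 ≠ u3 := by tauto
  have d34 : u3 ≠ u4 := by tauto
  -- coordinates of x'
  have hx1 : x'.1 = max u2.1 u3.1 := by rw [hx']
  have hx2 : x'.2 = max u3.2 u4.2 := by rw [hx']
  have hAx : max u2.1 u3.1 < x.1 := max_lt hq2.1 hq3.1
  have hBx : max u3.2 u4.2 < x.2 := max_lt hq3.2 hq4.2
  have hA2 : u2.1 ≤ max u2.1 u3.1 := le_max_left _ _
  have hA3 : u3.1 ≤ max u2.1 u3.1 := le_max_right _ _
  have hB3 : u3.2 ≤ max u3.2 u4.2 := le_max_left _ _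
  have hB4 : u4.2 ≤ max u3.2 u4.2 := le_max_right _ _
  have hqx1 : q.1 ≠ x.1 := (hgen q hq x hx hqx).1
  have hqx2 : q.2 ≠ x.2 := (hgen q hq x hx hqx).2
  have h23x : u2.1 ≠ u3.1 := (hgen u2 h2 u3 h3 d23).1
  have h23y : u2.2 ≠ u3.2 := (hgen u2 h2 u3 h3 d23).2
  have h34y : u3.2 ≠ u4.2 := (hgen u3 h3 u4 h4 d34).2
  have h12y : u1.2 ≠ u2.2 := (hgen u1 h1 u2 h2 d12).2
  have h41x : u4.1 ≠ u1.1 := (hgen u4 h4 u1 h1 (Ne.symm d14)).1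
  refine ⟨?_, ?_, ?_, ?_⟩
  · -- RI x' u1
    intro hmem
    rw [mem_RI_iff (show x'.1 ≠ u1.1 by rw [hx1]; exact ne_of_lt (by linarith))
        (show x'.2 ≠ u1.2 by rw [hx2]; exact ne_of_lt (by linarith))] at hmem
    rw [hx1, hx2, min_eq_left (by linarith : max u2.1 u3.1 ≤ u1.1),
        max_eq_right (by linarith : max u2.1 u3.1 ≤ u1.1),
        min_eq_left (by linarith : max u3.2 u4.2 ≤ u1.2),
        max_eq_right (by linarith : max u3.2 u4.2 ≤ u1.2)] at hmem
    obtain ⟨⟨ha, hb⟩, hc, hd⟩ := hmem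
    rcases lt_or_gt_of_ne hqx1 with hlt | hgt
    · rcases lt_or_gt_of_ne hqx2 with hlt2 | hgt2
      · -- q ∈ RI x u3
        have hne3 : q ≠ u3 := by intro h; subst h; linarith
        refine hemp x u3 (Or.inr (Or.inr (Or.inl rfl))) q hq hqx hne3 ?_
        refine (mem_RI_iff (ne_of_gt hq3.1) (ne_of_gt hq3.2)).2
          ⟨⟨min_lt_iff.2 ?_, lt_max_iff.2 ?_⟩, min_lt_iff.2 ?_, lt_max_iff.2 ?_⟩
        · exact Or.inr (by linarith)
        · exact Or.inl hlt
        · exact Or.inr (by linarith)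
        · exact Or.inl hlt2
      · -- q.2 > x.2 : compare with u2.2
        have hne2 : q ≠ u2 := by intro h; subst h; linarith
        have hq2y : q.2 ≠ u2.2 := (hgen q hq u2 h2 hne2).2
        rcases lt_or_gt_of_ne hq2y with hlt2 | hgt2'
        · -- q ∈ RI x u2
          refine hemp x u2 (Or.inr (Or.inl rfl)) q hq hqx hne2 ?_
          refine (mem_RI_iff (ne_of_gt hq2.1) (ne_of_lt hq2.2)).2
            ⟨⟨min_lt_iff.2 ?_, lt_max_iff.2 ?_⟩, min_lt_iff.2 ?_, lt_max_iff.2 ?_⟩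
          · exact Or.inr (by linarith)
          · exact Or.inl hlt
          · exact Or.inl hgt2
          · exact Or.inr hlt2
        · -- q ∈ RI u1 u2
          have hne1 : q ≠ u1 := by intro h; subst h; linarith
          refine hemp u1 u2 (by tauto) q hq hne1 hne2 ?_
          refine (mem_RI_iff (ne_of_gt (by linarith : u2.1 < u1.1)) h12y).2
            ⟨⟨min_lt_iff.2 ?_, lt_max_iff.2 ?_⟩, min_lt_iff.2 ?_, lt_max_iff.2 ?_⟩
          · exact Or.inr (by linarith)
          · exact Or.inl (by linarith)
          · exact Or.inr (by linarith)
          · exact Or.inl hd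
    · rcases lt_or_gt_of_ne hqx2 with hlt2 | hgt2
      · -- q.1 > x.1, q.2 < x.2 : compare with u4.1
        have hne4 : q ≠ u4 := by intro h; subst h; linarith
        have hq4x : q.1 ≠ u4.1 := (hgen q hq u4 h4 hne4).1
        rcases lt_or_gt_of_ne hq4x with hlt4 | hgt4
        · -- q ∈ RI x u4
          refine hemp x u4 (by tauto) q hq hqx hne4 ?_
          refine (mem_RI_iff (ne_of_lt hq4.1) (ne_of_gt hq4.2)).2
            ⟨⟨min_lt_iff.2 ?_, lt_max_iff.2 ?_⟩, min_lt_iff.2 ?_, lt_max_iff.2 ?_⟩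
          · exact Or.inl hgt
          · exact Or.inr hlt4
          · exact Or.inr (by linarith)
          · exact Or.inl hlt2
        · -- q ∈ RI u4 u1
          have hne1 : q ≠ u1 := by intro h; subst h; linarith
          refine hemp u4 u1 (by tauto) q hq hne4 hne1 ?_
          refine (mem_RI_iff h41x (ne_of_lt (by linarith : u4.2 < u1.2))).2
            ⟨⟨min_lt_iff.2 ?_, lt_max_iff.2 ?_⟩, min_lt_iff.2 ?_, lt_max_iff.2 ?_⟩
          · exact Or.inl hgt4
          · exact Or.inr hb
          · exact Or.inl (by linarith)
          · exact Or.inr (by linarith)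
      · -- q ∈ RI x u1
        have hne1 : q ≠ u1 := by intro h; subst h; linarith
        refine hemp x u1 (Or.inl rfl) q hq hqx hne1 ?_
        refine (mem_RI_iff (ne_of_lt hq1.1) (ne_of_lt hq1.2)).2
          ⟨⟨min_lt_iff.2 ?_, lt_max_iff.2 ?_⟩, min_lt_iff.2 ?_, lt_max_iff.2 ?_⟩
        · exact Or.inl hgt
        · exact Or.inr hb
        · exact Or.inl hgt2
        · exact Or.inr hd
  · -- RI x' u2
    intro hmem
    rcases lt_or_gt_of_ne h23x with h23 | h32
    · -- max = u3.1 > u2.1 : open rectangle, inside RI u2 u3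
      have hA : max u2.1 u3.1 = u3.1 := max_eq_right (le_of_lt h23)
      rw [mem_RI_iff (show x'.1 ≠ u2.1 by rw [hx1, hA]; exact (ne_of_lt h23).symm)
          (show x'.2 ≠ u2.2 by rw [hx2]; exact ne_of_lt (by linarith))] at hmem
      rw [hx1, hx2, hA, min_eq_right (le_of_lt h23), max_eq_left (le_of_lt h23),
          min_eq_left (by linarith : max u3.2 u4.2 ≤ u2.2),
          max_eq_right (by linarith : max u3.2 u4.2 ≤ u2.2)] at hmem
      obtain ⟨⟨ha, hb⟩, hc, hd⟩ := hmem
      have hne2 : q ≠ u2 := by intro h; subst h; linarith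
      have hne3 : q ≠ u3 := by intro h; subst h; linarith
      refine hemp u2 u3 (by tauto) q hq hne2 hne3 ?_
      refine (mem_RI_iff h23x h23y).2
        ⟨⟨min_lt_iff.2 ?_, lt_max_iff.2 ?_⟩, min_lt_iff.2 ?_, lt_max_iff.2 ?_⟩
      · exact Or.inl ha
      · exact Or.inr hb
      · exact Or.inr (by linarith)
      · exact Or.inl hd
    · -- max = u2.1 : vertical open segment on x = u2.1, contains no point of S
      have hA : max u2.1 u3.1 = u2.1 := max_eq_left (le_of_lt h32)
      rw [mem_RI_vert (show x'.1 = u2.1 by rw [hx1, hA])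
          (show x'.2 ≠ u2.2 by rw [hx2]; exact ne_of_lt (by linarith))] at hmem
      obtain ⟨hq1e, hc, hd⟩ := hmem
      rw [hx1, hA] at hq1e
      rw [hx2, max_eq_right (by linarith : max u3.2 u4.2 ≤ u2.2)] at hd
      by_cases hqe : q = u2
      · subst hqe; linarith
      · exact (hgen q hq u2 h2 hqe).1 hq1e
  · -- RI x' u3
    intro hmem
    rcases lt_or_gt_of_ne h23x with h23 | h32
    · -- x'.1 = u3.1
      rcases lt_or_gt_of_ne h34y with h34 | h43
      · -- x'.2 = u4.2 : vertical segment on x = u3.1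
        have hA : max u2.1 u3.1 = u3.1 := max_eq_right (le_of_lt h23)
        have hB : max u3.2 u4.2 = u4.2 := max_eq_right (le_of_lt h34)
        rw [mem_RI_vert (show x'.1 = u3.1 by rw [hx1, hA])
            (show x'.2 ≠ u3.2 by rw [hx2, hB]; exact (ne_of_lt h34).symm)] at hmem
        obtain ⟨hq1e, hc, hd⟩ := hmem
        rw [hx1, hA] at hq1e
        rw [hx2, hB, min_eq_right (le_of_lt h34)] at hc
        by_cases hqe : q = u3
        · subst hqe; linarith
        · exact (hgen q hq u3 h3 hqe).1 hq1e
      · -- x'.2 = u3.2 : x' = u3 ∈ S, contradiction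
        exfalso
        apply hx'S
        have : x' = u3 := by
          have hA : max u2.1 u3.1 = u3.1 := max_eq_right (le_of_lt h23)
          have hB : max u3.2 u4.2 = u3.2 := max_eq_left (le_of_lt h43)
          rw [hx', hA, hB]
        rw [this]; exact h3
    · -- x'.1 = u2.1 > u3.1
      have hA : max u2.1 u3.1 = u2.1 := max_eq_left (le_of_lt h32)
      rcases lt_or_gt_of_ne h34y with h34 | h43
      · -- x'.2 = u4.2 > u3.2 : open rectangle (u3.1,u2.1)×(u3.2,u4.2) ⊆ RI x u3
        have hB : max u3.2 u4.2 = u4.2 := max_eq_right (le_of_lt h34)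
        rw [mem_RI_iff (show x'.1 ≠ u3.1 by rw [hx1, hA]; exact ne_of_gt h32)
            (show x'.2 ≠ u3.2 by rw [hx2, hB]; exact ne_of_gt h34)] at hmem
        rw [hx1, hx2, hA, hB, min_eq_right (le_of_lt h32), max_eq_left (le_of_lt h32),
            min_eq_right (le_of_lt h34), max_eq_left (le_of_lt h34)] at hmem
        obtain ⟨⟨ha, hb⟩, hc, hd⟩ := hmem
        have hne3 : q ≠ u3 := by intro h; subst h; linarith
        refine hemp x u3 (by tauto) q hq hqx hne3 ?_
        refine (mem_RI_iff (ne_of_gt hq3.1) (ne_of_gt hq3.2)).2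
          ⟨⟨min_lt_iff.2 ?_, lt_max_iff.2 ?_⟩, min_lt_iff.2 ?_, lt_max_iff.2 ?_⟩
        · exact Or.inr ha
        · exact Or.inl (by linarith)
        · exact Or.inr hc
        · exact Or.inl (by linarith)
      · -- x'.2 = u3.2 : horizontal segment on y = u3.2
        have hB : max u3.2 u4.2 = u3.2 := max_eq_left (le_of_lt h43)
        rw [mem_RI_horiz (show x'.1 ≠ u3.1 by rw [hx1, hA]; exact ne_of_gt h32)
            (show x'.2 = u3.2 by rw [hx2, hB])] at hmem
        obtain ⟨hq2e, hc, hd⟩ := hmem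
        rw [hx2, hB] at hq2e
        rw [hx1, hA, min_eq_right (le_of_lt h32)] at hc
        by_cases hqe : q = u3
        · subst hqe; linarith
        · exact (hgen q hq u3 h3 hqe).2 hq2e
  · -- RI x' u4
    intro hmem
    rcases lt_or_gt_of_ne h34y with h34 | h43
    · -- x'.2 = u4.2 : horizontal segment on y = u4.2
      have hB : max u3.2 u4.2 = u4.2 := max_eq_right (le_of_lt h34)
      rw [mem_RI_horiz (show x'.1 ≠ u4.1 by rw [hx1]; exact ne_of_lt (by linarith))
          (show x'.2 = u4.2 by rw [hx2, hB])] at hmem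
      obtain ⟨hq2e, hc, hd⟩ := hmem
      rw [hx2, hB] at hq2e
      rw [hx1, max_eq_right (by linarith : max u2.1 u3.1 ≤ u4.1)] at hd
      by_cases hqe : q = u4
      · subst hqe; linarith
      · exact (hgen q hq u4 h4 hqe).2 hq2e
    · -- x'.2 = u3.2 > u4.2 : open rectangle ⊆ RI u3 u4
      have hB : max u3.2 u4.2 = u3.2 := max_eq_left (le_of_lt h43)
      rw [mem_RI_iff (show x'.1 ≠ u4.1 by rw [hx1]; exact ne_of_lt (by linarith))
          (show x'.2 ≠ u4.2 by rw [hx2, hB]; exact ne_of_gt h43)] at hmem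
      rw [hx1, hx2, hB, min_eq_left (by linarith : max u2.1 u3.1 ≤ u4.1),
          max_eq_right (by linarith : max u2.1 u3.1 ≤ u4.1),
          min_eq_right (le_of_lt h43), max_eq_left (le_of_lt h43)] at hmem
      obtain ⟨⟨ha, hb⟩, hc, hd⟩ := hmem
      have hne3 : q ≠ u3 := by intro h; subst h; linarith
      have hne4 : q ≠ u4 := by intro h; subst h; linarith
      refine hemp u3 u4 (by tauto) q hq hne3 hne4 ?_
      refine (mem_RI_iff (ne_of_lt (by linarith : u3.1 < u4.1)) h34y).2
        ⟨⟨min_lt_iff.2 ?_, lt_max_iff.2 ?_⟩, min_lt_iff.2 ?_, lt_max_iff.2 ?_⟩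
      · exact Or.inl (by linarith)
      · exact Or.inr hb
      · exact Or.inr hc
      · exact Or.inl hd
end

section
/- Let n ≥ 4 be an integer and let p be any point on the closed straight-line segment from (1, n²−3n+4) to (n, 1) in ℝ². If the x-coordinate of p satisfies 2 ≤ x(p) ≤ n−1, then the y-coordinate of p satisfies y(p) > n−1. (Hence this segment passes strictly above every grid point (a,b) with 2 ≤ a ≤ n−1 and 2 ≤ b ≤ n−1, so after relocating the top-left vertex of an n × n rectangle-of-influence drawing to (1, n²−3n+4), the missing outer edge can be drawn as a straight segment without crossing the rest of the drawing.) -/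
/-- For `n ≥ 4`, every point `p` on the closed segment from `(1, n²−3n+4)` to
`(n, 1)` with `2 ≤ x(p) ≤ n−1` satisfies `y(p) > n−1`. -/
theorem stretched_edge_above_grid (n : ℕ) (hn : 4 ≤ n) (p : ℝ × ℝ)
    (hp : p ∈ segment ℝ ((1 : ℝ), ((n : ℝ) ^ 2 - 3 * n + 4)) ((n : ℝ), (1 : ℝ)))
    (hx1 : 2 ≤ p.1) (hx2 : p.1 ≤ (n : ℝ) - 1) :
    (n : ℝ) - 1 < p.2 := by
  obtain ⟨a, b, ha, hb, hab, hpb⟩ := hp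
  have hN : (4 : ℝ) ≤ (n : ℝ) := by exact_mod_cast hn
  have h1 : p.1 = a * 1 + b * n := by rw [← hpb]; simp [Prod.smul_def]
  have h2 : p.2 = a * ((n : ℝ) ^ 2 - 3 * n + 4) + b * 1 := by
    rw [← hpb]; simp [Prod.smul_def]
  rw [h2]
  rw [h1] at hx2
  have hb' : b = 1 - a := by linarith
  subst hb'
  have key : 1 ≤ a * ((n : ℝ) - 1) := by nlinarith
  have ha' : 0 < a := by nlinarith
  nlinarith [mul_le_mul_of_nonneg_right key (by linarith : (0:ℝ) ≤ (n:ℝ) - 2)]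
end
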